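/- arXiv:0802.2705 — 2 statements merged into one kernel-verified Lean document; each statement's English description precedes it below -/
import Mathlib

section
/- Let μ be a computable Borel probability measure on Cantor space, i.e. there is a computable g : Strings × ℕ → ℚ with |g(σ,n) − μ([σ])| ≤ 2^{-n} for all σ, n. If μ({x}) > 0 for some x ∈ 2^ω, then x is computable. -/
/-
If `μ {x} > 0`, then far enough along `x` the cylinder `[x ↾ m]` has measure less than
`2 μ {x}`. For `j ≥ m`, the child of `[x ↾ j]` that contains `x` has measure at least `μ {x}`,
while the other child has measure at most `μ [x ↾ m] - μ {x} < μ {x}`. A fixed rational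
threshold `q` strictly between these bounds, with a margin larger than the approximation error
`2⁻ⁿ`, lets us read off the bit `x j` by comparing `g ((x ↾ j) ++ [true], n)` with `q`.
Starting from the finite word `x ↾ m`, this computes `x`.
-/

open MeasureTheory

abbrev Cantor : Type := ℕ → Bool

def cyl (σ : List Bool) : Set Cantor := {x | ∀ i, i < σ.length → x i = σ.getD i false}


open Encodable Filter Topology

theorem Primrec.nat_gcd : Primrec₂ Nat.gcd := by
  have hdvd : PrimrecRel fun (p : ℕ × ℕ) k => k ∣ p.1 ∧ k ∣ p.2 :=
    (PrimrecPred.and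
      (Primrec.eq.comp (Primrec.nat_mod.comp (Primrec.fst.comp Primrec.fst) Primrec.snd)
        (Primrec.const 0))
      (Primrec.eq.comp (Primrec.nat_mod.comp (Primrec.snd.comp Primrec.fst) Primrec.snd)
        (Primrec.const 0))).of_eq fun _ => by simp only [Nat.dvd_iff_mod_eq_zero]
  refine (Primrec.nat_findGreatest (Primrec.nat_add.comp Primrec.fst Primrec.snd) hdvd).to₂.of_eq
    fun a b => Nat.findGreatest_eq_iff.mpr
      ⟨?_, fun _ => ⟨Nat.gcd_dvd_left a b, Nat.gcd_dvd_right a b⟩, ?_⟩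
  · rcases Nat.eq_zero_or_pos a with rfl | ha
    · simp
    · exact (Nat.gcd_le_left b ha).trans (Nat.le_add_right a b)
  · rintro k hlt hle ⟨hka, hkb⟩
    rcases Nat.eq_zero_or_pos (Nat.gcd a b) with h0 | hpos
    · rw [Nat.gcd_eq_zero_iff] at h0
      omega
    · exact hlt.not_ge (Nat.le_of_dvd hpos (Nat.dvd_gcd hka hkb))

namespace Nat.Subtype

variable {s : Set ℕ} [DecidablePred (· ∈ s)] [Infinite s]

theorem coe_ofNat_eq_iff {m n : ℕ} :
    (ofNat s n : ℕ) = m ↔ m ∈ s ∧ (List.range m).countP (· ∈ s) = n := by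
  let := Nat.Subtype.denumerable s
  constructor
  · rintro rfl
    exact ⟨(ofNat s n).2, Denumerable.encode_ofNat (α := s) n⟩
  · rintro ⟨hm, rfl⟩
    exact congrArg Subtype.val (Denumerable.ofNat_encode (α := s) ⟨m, hm⟩)

theorem computable_coe_ofNat (hs : PrimrecPred (· ∈ s)) :
    Computable fun n => (ofNat s n : ℕ) := by
  have hsearch : Primrec₂ fun n m => decide (m ∈ s ∧ (List.range m).countP (· ∈ s) = n) :=
    (hs.comp Primrec.snd |>.and <| Primrec.eq.comp (Primrec.list_length.comp <|
      (Primrec.listFilter hs).comp (Primrec.list_range.comp Primrec.snd)) Primrec.fst).decide.of_eq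
      fun _ => by simp [List.countP_eq_length_filter]
  have hrfind : _root_.Partrec fun n => Nat.rfind fun m =>
      Part.some (decide (m ∈ s ∧ (List.range m).countP (· ∈ s) = n)) :=
    _root_.Partrec.rfind hsearch.to_comp.partrec₂
  have hspec (n : ℕ) : (Nat.rfind fun m =>
      Part.some (decide (m ∈ s ∧ (List.range m).countP (· ∈ s) = n))) =
        Part.some (ofNat s n : ℕ) := by
    refine Part.eq_some_iff.mpr (Nat.mem_rfind.mpr ⟨?_, fun {m} hm => ?_⟩)
    · simpa using coe_ofNat_eq_iff.mp rfl
    · simpa using fun h₁ h₂ => hm.ne (coe_ofNat_eq_iff.mpr ⟨h₁, h₂⟩).symm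
  exact hrfind.of_eq hspec

end Nat.Subtype

theorem Int.encode_natCast (k : ℕ) : encode (k : ℤ) = 2 * k := rfl

theorem Int.encode_negSucc (k : ℕ) : encode (Int.negSucc k) = 2 * k + 1 := rfl

theorem Int.encode_add_one_div_two (n : ℤ) : (encode n + 1) / 2 = n.natAbs := by
  cases n with
  | ofNat k => rw [Int.ofNat_eq_natCast, Int.encode_natCast]; omega
  | negSucc k => rw [Int.encode_negSucc]; omega

theorem Rat.encode_eq (r : ℚ) : encode r = Nat.pair (encode r.num) r.den := rfl

theorem Rat.mem_range_encode_iff (m : ℕ) : m ∈ Set.range (encode : ℚ → ℕ) ↔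
    0 < m.unpair.2 ∧ Nat.Coprime ((m.unpair.1 + 1) / 2) m.unpair.2 := by
  constructor
  · rintro ⟨r, rfl⟩
    rw [Rat.encode_eq, Nat.unpair_pair, Int.encode_add_one_div_two]
    exact ⟨r.den_pos, r.reduced⟩
  · rintro ⟨hden, hcop⟩
    obtain ⟨n, hn⟩ := Equiv.intEquivNat.surjective m.unpair.1
    refine ⟨⟨n, m.unpair.2, hden.ne', ?_⟩, ?_⟩
    · rwa [← Int.encode_add_one_div_two, show encode n = m.unpair.1 from hn]
    · rw [Rat.encode_eq]
      exact (congrArg₂ Nat.pair hn rfl).trans (Nat.pair_unpair m)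

theorem Rat.primrecPred_mem_range_encode : PrimrecPred (· ∈ Set.range (encode : ℚ → ℕ)) :=
  (Primrec.nat_lt.comp (Primrec.const 0) (Primrec.snd.comp Primrec.unpair) |>.and <|
    Primrec.eq.comp (Primrec.nat_gcd.comp (Primrec.nat_div.comp
      (Primrec.succ.comp (Primrec.fst.comp Primrec.unpair)) (Primrec.const 2))
      (Primrec.snd.comp Primrec.unpair)) (Primrec.const 1)).of_eq
    fun m => (Rat.mem_range_encode_iff m).symm

/- `encode` is the structural code `Nat.pair (encode r.num) r.den`, whereas the `Primcodable ℚ`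
instance (through `Denumerable.ofEncodableOfInfinite`) codes `r` by the rank of `encode r` in the
range of `encode`; that rank is inverted by a search. -/
theorem Rat.computable_encode : Computable (encode : ℚ → ℕ) := by
  let := decidableRangeEncode ℚ
  have := (Set.infinite_range_of_injective (encode_injective (α := ℚ))).to_subtype
  refine (Nat.Subtype.computable_coe_ofNat Rat.primrecPred_mem_range_encode |>.comp
    Computable.encode).of_eq fun r => ?_
  exact Nat.Subtype.coe_ofNat_eq_iff.mpr ⟨Set.mem_range_self r, rfl⟩

theorem Rat.computable_decide_lt (q : ℚ) (hq : 0 < q) :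
    Computable fun r : ℚ => decide (q < r) := by
  -- as `0 < q`, `q < r` iff `0 ≤ r.num` (i.e. `encode r.num` is even)
  -- and `q.num * r.den < r.num * q.den`
  have hcode : Primrec fun m : ℕ =>
      decide (m.unpair.1 % 2 = 0 ∧ q.num.toNat * m.unpair.2 < m.unpair.1 / 2 * q.den) :=
    (Primrec.eq.comp (Primrec.nat_mod.comp (Primrec.fst.comp Primrec.unpair) (Primrec.const 2))
      (Primrec.const 0) |>.and <| Primrec.nat_lt.comp
        (Primrec.nat_mul.comp (Primrec.const _) (Primrec.snd.comp Primrec.unpair))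
        (Primrec.nat_mul.comp (Primrec.nat_div.comp (Primrec.fst.comp Primrec.unpair)
          (Primrec.const 2)) (Primrec.const _))).decide
  refine (hcode.to_comp.comp Rat.computable_encode).of_eq fun r => ?_
  have hqnum : (q.num.toNat : ℤ) = q.num := Int.toNat_of_nonneg (Rat.num_pos.mpr hq).le
  simp only [Rat.encode_eq, Nat.unpair_pair, Rat.lt_iff q r]
  cases r.num with
  | ofNat k =>
    rw [Int.ofNat_eq_natCast, Int.encode_natCast, ← hqnum]
    simp only [Nat.mul_mod_right, Nat.mul_div_cancel_left k two_pos, true_and]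
    norm_cast
  | negSucc k =>
    have hneg : Int.negSucc k * q.den < 0 :=
      Int.mul_neg_of_neg_of_pos (Int.negSucc_lt_zero k) (by positivity)
    have hnonneg : 0 ≤ q.num * r.den := by rw [← hqnum]; positivity
    simp only [Int.encode_negSucc, Nat.mul_add_mod, decide_eq_decide]
    omega

theorem exists_rat_threshold {δ a : ℝ} (hδ : 0 ≤ δ) (hδa : δ < a) :
    ∃ n : ℕ, ∃ q : ℚ, 0 < q ∧ δ + 2⁻¹ ^ n < q ∧ q + 2⁻¹ ^ n < a := by
  obtain ⟨n, hn⟩ :=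
    exists_pow_lt_of_lt_one (half_pos (sub_pos.mpr hδa)) (by norm_num : (2:ℝ)⁻¹ < 1)
  obtain ⟨q, hq₁, hq₂⟩ := exists_rat_btwn (by linarith : δ + 2⁻¹ ^ n < a - 2⁻¹ ^ n)
  have : (0 : ℝ) < q := by linarith [pow_pos (by norm_num : (0:ℝ) < 2⁻¹) n]
  exact ⟨n, q, by exact_mod_cast this, hq₁, by linarith⟩

theorem mem_cyl_append_singleton {σ : List Bool} {b : Bool} {y : Cantor} :
    y ∈ cyl (σ ++ [b]) ↔ y ∈ cyl σ ∧ y σ.length = b := by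
  simp only [cyl, Set.mem_ofPred_eq, List.length_append, List.length_singleton]
  constructor
  · intro h
    refine ⟨fun i hi => ?_, by simpa using h σ.length (by omega)⟩
    rw [h i (by omega), List.getD_append _ _ _ _ hi]
  · rintro ⟨h, hb⟩ i hi
    rcases Nat.lt_succ_iff_lt_or_eq.mp hi with hi | rfl
    · rw [List.getD_append _ _ _ _ hi, h i hi]
    · simpa using hb

theorem measurableSet_cyl (σ : List Bool) : MeasurableSet (cyl σ) := by
  have : cyl σ = ⋂ i ∈ Set.Iio σ.length, Function.eval i ⁻¹' {σ.getD i false} := by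
    ext y
    simp [cyl]
  rw [this]
  exact MeasurableSet.biInter (Set.to_countable _) fun i _ =>
    measurable_pi_apply i (measurableSet_singleton _)

theorem measure_cyl_append_add (μ : Measure Cantor) (σ : List Bool) (b : Bool) :
    μ (cyl (σ ++ [b])) + μ (cyl (σ ++ [!b])) = μ (cyl σ) := by
  rw [← measure_union _ (measurableSet_cyl _)]
  · congr 1
    ext y
    simp only [Set.mem_union, mem_cyl_append_singleton]
    cases b <;> cases y σ.length <;> simp
  · refine Set.disjoint_left.mpr fun y hy hy' => ?_
    have := (mem_cyl_append_singleton.mp hy).2.symm.trans (mem_cyl_append_singleton.mp hy').2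
    cases b <;> simp at this

namespace Cantor

def restrict (x : Cantor) (k : ℕ) : List Bool := (List.range k).map x

variable {x y : Cantor} {k : ℕ}

@[simp]
theorem length_restrict : (x.restrict k).length = k := by simp [restrict]

theorem getD_restrict {i : ℕ} (hi : i < k) : (x.restrict k).getD i false = x i := by
  simp [restrict, hi]

theorem restrict_succ : x.restrict (k + 1) = x.restrict k ++ [x k] := by
  simp [restrict, List.range_succ]

theorem mem_cyl_restrict : y ∈ cyl (x.restrict k) ↔ ∀ i < k, y i = x i := by
  simp +contextual only [cyl, Set.mem_ofPred_eq, length_restrict, getD_restrict]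

theorem mem_cyl_restrict_self : x ∈ cyl (x.restrict k) := mem_cyl_restrict.mpr fun _ _ => rfl

theorem antitone_cyl_restrict : Antitone fun k => cyl (x.restrict k) := fun _ _ hij _ hy =>
  mem_cyl_restrict.mpr fun i hi => mem_cyl_restrict.mp hy i (hi.trans_le hij)

theorem iInter_cyl_restrict : ⋂ k, cyl (x.restrict k) = {x} := by
  refine Set.eq_singleton_iff_unique_mem.mpr
    ⟨Set.mem_iInter.mpr fun _ => mem_cyl_restrict_self, fun y hy => funext fun i => ?_⟩
  exact mem_cyl_restrict.mp (Set.mem_iInter.mp hy (i + 1)) i i.lt_succ_self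

section Measure

variable (μ : Measure Cantor) (x : Cantor)

theorem tendsto_measure_cyl_restrict [IsFiniteMeasure μ] :
    Tendsto (fun k => μ (cyl (x.restrict k))) atTop (𝓝 (μ {x})) := by
  rw [← iInter_cyl_restrict]
  exact tendsto_measure_iInter_atTop (fun k => (measurableSet_cyl _).nullMeasurableSet)
    antitone_cyl_restrict ⟨0, measure_ne_top μ _⟩

theorem measure_cyl_sibling_add_le [IsFiniteMeasure μ] {m j : ℕ} (hmj : m ≤ j) :
    (μ (cyl (x.restrict j ++ [!x j]))).toReal + (μ {x}).toReal ≤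
      (μ (cyl (x.restrict m))).toReal := by
  rw [← ENNReal.toReal_add (measure_ne_top _ _) (measure_ne_top _ _)]
  refine ENNReal.toReal_mono (measure_ne_top _ _) ?_
  calc
    _ ≤ μ (cyl (x.restrict j ++ [!x j])) + μ (cyl (x.restrict j ++ [x j])) := by
      gcongr
      rw [← restrict_succ, Set.singleton_subset_iff]
      exact mem_cyl_restrict_self
    _ = μ (cyl (x.restrict j)) := by rw [add_comm, measure_cyl_append_add]
    _ ≤ μ (cyl (x.restrict m)) := measure_mono (antitone_cyl_restrict hmj)

end Measure

theorem computable_of_eventually_eq {x : Cantor} {h : List Bool → Bool} (hh : Computable h)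
    (m : ℕ) (hx : ∀ j, m ≤ j → h (x.restrict j) = x j) : Computable x := by
  let extend : ℕ → List Bool := fun k => Nat.rec (x.restrict m) (fun _ σ => σ ++ [h σ]) k
  have hextend (k : ℕ) : extend k = x.restrict (m + k) := by
    induction k with
    | zero => rfl
    | succ k ih =>
      change extend k ++ [h (extend k)] = _
      rw [ih, hx (m + k) (Nat.le_add_right m k), ← restrict_succ]
      rfl
  have hcomp : Computable extend :=
    Computable.nat_rec Computable.id (Computable.const _) <|
      (Computable.list_concat.comp (Computable.snd.comp Computable.snd)
        (hh.comp (Computable.snd.comp Computable.snd))).to₂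
  refine ((Primrec.list_getD false).to_comp.comp (hcomp.comp Computable.succ) Computable.id).of_eq
    fun j => ?_
  exact (congrArg (·.getD j false) (hextend (j + 1))).trans (getD_restrict (by omega))

theorem exists_threshold_decide_approx_eq (μ : Measure Cantor) [IsFiniteMeasure μ]
    (g : List Bool × ℕ → ℚ)
    (happrox : ∀ σ n, |(g (σ, n) : ℝ) - (μ (cyl σ)).toReal| ≤ (2:ℝ)⁻¹ ^ n)
    (x : Cantor) (hatom : 0 < μ {x}) :
    ∃ q : ℚ, 0 < q ∧ ∃ n m, ∀ j, m ≤ j →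
      decide (q < g (x.restrict j ++ [true], n)) = x j := by
  set A := (μ {x}).toReal
  have hA : 0 < A := ENNReal.toReal_pos hatom.ne' (measure_ne_top μ _)
  have hA_le (k : ℕ) : A ≤ (μ (cyl (x.restrict k))).toReal :=
    ENNReal.toReal_mono (measure_ne_top _ _)
      (measure_mono (Set.singleton_subset_iff.mpr mem_cyl_restrict_self))
  obtain ⟨m, hm⟩ : ∃ m, (μ (cyl (x.restrict m))).toReal < 2 * A :=
    (((ENNReal.tendsto_toReal (measure_ne_top μ _)).comp
      (tendsto_measure_cyl_restrict μ x)).eventually_lt_const (by linarith)).exists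
  obtain ⟨n, q, hq, hδq, hqA⟩ :=
    exists_rat_threshold (sub_nonneg.mpr (hA_le m)) (by linarith : _ - A < A)
  refine ⟨q, hq, n, m, fun j hj => ?_⟩
  have hg := abs_le.mp (happrox (x.restrict j ++ [true]) n)
  cases hxj : x j with
  | false =>
    have hsib := measure_cyl_sibling_add_le μ x hj
    rw [hxj, Bool.not_false] at hsib
    have : (g (x.restrict j ++ [true], n) : ℝ) < q := by linarith
    exact decide_eq_false (by exact_mod_cast this.not_gt)
  | true =>
    have hchild := hA_le (j + 1)
    rw [restrict_succ, hxj] at hchild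
    have : (q : ℝ) < g (x.restrict j ++ [true], n) := by linarith
    exact decide_eq_true (by exact_mod_cast this)

end Cantor

theorem stmt_4 (μ : Measure Cantor) [IsProbabilityMeasure μ]
    (g : List Bool × ℕ → ℚ) (hg : Computable g)
    (happrox : ∀ σ n, |(g (σ, n) : ℝ) - (μ (cyl σ)).toReal| ≤ (2:ℝ)⁻¹ ^ n)
    (x : Cantor) (hatom : 0 < μ {x}) :
    Computable x := by
  obtain ⟨q, hq, n, m, hdecide⟩ := Cantor.exists_threshold_decide_approx_eq μ g happrox x hatom
  have happend : Computable fun σ : List Bool => (σ ++ [true], n) :=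
    (Computable.list_concat.comp Computable.id (Computable.const true)).pair (Computable.const n)
  exact Cantor.computable_of_eventually_eq ((Rat.computable_decide_lt q hq).comp (hg.comp happend))
    m hdecide
end

section
/- Let μ be an atomless Borel probability measure on Cantor space with μ([σ]) > 0 for every string σ. Then there exists a monotone map φ on finite strings inducing an order-preserving homeomorphism Φ : 2^ω → 2^ω. In particular, for every such μ there is a homeomorphism Φ of 2^ω such that the pushforward of μ under Φ is a measure λ with |λ([τ]) − 2^{-|τ|}| ≤ 2^{-|τ|} for all strings τ. -/
open MeasureTheory ENNReal

def seg (x : Cantor) (n : ℕ) : List Bool := List.ofFn (fun i : Fin n => x i)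

/-!
Since `μ` is atomless, a clopen set can be cut into two clopen parts of almost prescribed
measures. Cut Cantor space recursively into a binary tree of nonempty clopen pieces, the pieces
of level `n` having measure at most `(2 - 2⁻ⁿ) 2⁻ⁿ`, each cut being made along the first
coordinate on which the piece takes both values, or as close to it as the bounds permit. Every
branch of the tree then shrinks to a point, and the map from branches to points is a homeomorphism
whose inverse `Φ` pulls `[τ]` back to the piece with address `τ`. Any continuous self-map of
Cantor space is induced by the monotone map sending `σ` to the longest prefix, of length at most
`|σ|`, shared by all images of `[σ]`.
-/

open Set PiNat

namespace Cantor

lemma iInter_cylinder (x : Cantor) : ⋂ n, PiNat.cylinder x n = {x} := by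
  refine Subset.antisymm (fun y hy => ?_) (fun y hy => hy ▸ mem_iInter.2 (self_mem_cylinder y))
  exact funext fun i => mem_iInter.1 hy (i + 1) i i.lt_succ_self

lemma exists_cylinder_subset {U : Set Cantor} (hU : IsOpen U) {x : Cantor} (hx : x ∈ U) :
    ∃ n, PiNat.cylinder x n ⊆ U := by
  obtain ⟨_, ⟨y, n, rfl⟩, hxy, hsub⟩ :=
    (isTopologicalBasis_cylinders fun _ => Bool).exists_subset_of_mem_open hx hU
  exact ⟨n, mem_cylinder_iff_eq.1 hxy ▸ hsub⟩

lemma isClopen_of_cylinder_subset {S : Set Cantor} (n : ℕ)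
    (hS : ∀ x ∈ S, PiNat.cylinder x n ⊆ S) : IsClopen S := by
  refine ⟨⟨isOpen_iff_forall_mem_open.2 fun x hx => ?_⟩,
    isOpen_iff_forall_mem_open.2 fun x hx => ⟨PiNat.cylinder x n, hS x hx, isOpen_cylinder _ x n,
      self_mem_cylinder x n⟩⟩
  exact ⟨PiNat.cylinder x n, fun y hy hyS => hx (hS y hyS ((mem_cylinder_comm x y n).1 hy)),
    isOpen_cylinder _ x n, self_mem_cylinder x n⟩

section Strings

def ofList (σ : List Bool) : Cantor := fun i => σ.getD i false

lemma cyl_eq_cylinder (σ : List Bool) : cyl σ = PiNat.cylinder (ofList σ) σ.length := rfl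

lemma ofList_mem_cyl (σ : List Bool) : ofList σ ∈ cyl σ := fun _ _ => rfl

lemma seg_length (x : Cantor) (n : ℕ) : (seg x n).length = n := List.length_ofFn

lemma cyl_seg (x : Cantor) (n : ℕ) : cyl (seg x n) = PiNat.cylinder x n := by
  ext y
  simp +contextual [cyl, seg]

lemma mem_cyl_seg (x : Cantor) (n : ℕ) : x ∈ cyl (seg x n) :=
  (cyl_seg x n).symm ▸ self_mem_cylinder x n

lemma measurableSet_cyl (σ : List Bool) : MeasurableSet (cyl σ) :=
  (cyl_eq_cylinder σ ▸ isOpen_cylinder _ _ _).measurableSet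

lemma seg_eq_of_mem_cylinder {x y : Cantor} {n : ℕ} (h : y ∈ PiNat.cylinder x n) :
    seg y n = seg x n :=
  congrArg List.ofFn (funext fun i => h i i.2)

lemma seg_prefix (x : Cantor) {m n : ℕ} (h : m ≤ n) : seg x m <+: seg x n :=
  List.prefix_iff_eq_take.2 <| List.ext_getElem (by simp [seg_length, h]) fun i _ _ => by
    simp [seg]

lemma cyl_subset_of_prefix {σ τ : List Bool} (h : σ <+: τ) : cyl τ ⊆ cyl σ := by
  obtain ⟨l, rfl⟩ := h
  intro x hx i hi
  rw [← List.getD_append σ l false i hi]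
  exact hx i (by simp only [List.length_append]; omega)

open Classical

variable (Φ : Cantor → Cantor)

noncomputable def agreeLength (σ : List Bool) : ℕ :=
  Nat.findGreatest (fun m => Φ '' cyl σ ⊆ PiNat.cylinder (Φ (ofList σ)) m) σ.length

noncomputable def stringMap (σ : List Bool) : List Bool := seg (Φ (ofList σ)) (agreeLength Φ σ)

lemma image_cyl_subset_cylinder_agreeLength (σ : List Bool) :
    Φ '' cyl σ ⊆ PiNat.cylinder (Φ (ofList σ)) (agreeLength Φ σ) :=
  Nat.findGreatest_spec (P := fun m => Φ '' cyl σ ⊆ PiNat.cylinder (Φ (ofList σ)) m)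
    (Nat.zero_le _) (by simp)

lemma image_cyl_subset_cyl_stringMap (σ : List Bool) : Φ '' cyl σ ⊆ cyl (stringMap Φ σ) := by
  rw [stringMap, cyl_seg]
  exact image_cyl_subset_cylinder_agreeLength Φ σ

lemma apply_mem_cyl_stringMap (x : Cantor) (n : ℕ) : Φ x ∈ cyl (stringMap Φ (seg x n)) :=
  image_cyl_subset_cyl_stringMap Φ _ ⟨x, mem_cyl_seg x n, rfl⟩

lemma stringMap_prefix {σ τ : List Bool} (h : σ <+: τ) : stringMap Φ σ <+: stringMap Φ τ := by
  have hsub := cyl_subset_of_prefix h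
  have hm := image_cyl_subset_cylinder_agreeLength Φ σ
  have hτ : Φ (ofList τ) ∈ PiNat.cylinder (Φ (ofList σ)) (agreeLength Φ σ) :=
    hm ⟨_, hsub (ofList_mem_cyl τ), rfl⟩
  have hle : agreeLength Φ σ ≤ agreeLength Φ τ :=
    Nat.le_findGreatest ((Nat.findGreatest_le _).trans h.length_le)
      (mem_cylinder_iff_eq.1 hτ ▸ (image_mono hsub).trans hm)
  rw [stringMap, ← seg_eq_of_mem_cylinder hτ]
  exact seg_prefix _ hle

lemma le_length_stringMap {Φ : Cantor → Cantor} (hΦ : Continuous Φ) (x : Cantor) (m : ℕ) :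
    ∃ n, m ≤ (stringMap Φ (seg x n)).length := by
  obtain ⟨n, hn⟩ := exists_cylinder_subset ((isOpen_cylinder _ (Φ x) m).preimage hΦ)
    (x := x) (self_mem_cylinder (Φ x) m)
  refine ⟨max n m, ?_⟩
  have himage : Φ '' cyl (seg x (max n m)) ⊆ PiNat.cylinder (Φ x) m := by
    rw [cyl_seg]
    rintro _ ⟨y, hy, rfl⟩
    exact hn (cylinder_anti x (le_max_left n m) hy)
  have hx : Φ (ofList (seg x (max n m))) ∈ PiNat.cylinder (Φ x) m :=
    himage ⟨_, ofList_mem_cyl _, rfl⟩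
  rw [stringMap, seg_length]
  exact Nat.le_findGreatest (by rw [seg_length]; exact le_max_right n m)
    (mem_cylinder_iff_eq.1 hx ▸ himage)

end Strings

section Measure

variable {μ : Measure Cantor} [IsFiniteMeasure μ]

lemma exists_measureReal_cylinder_le [NullSingletonClass μ] {δ : ℝ} (hδ : 0 < δ) :
    ∃ D, ∀ x, μ.real (PiNat.cylinder x D) ≤ δ := by
  have hsmall : ∀ x, ∃ d, μ (PiNat.cylinder x d) < ENNReal.ofReal δ := fun x => by
    have h := tendsto_measure_iInter_atTop (μ := μ) (s := PiNat.cylinder x)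
      (fun n => (isOpen_cylinder _ x n).measurableSet.nullMeasurableSet)
      (fun _ _ h => cylinder_anti x h) ⟨0, measure_ne_top μ _⟩
    rw [iInter_cylinder, measure_singleton] at h
    exact (h.eventually (gt_mem_nhds (ENNReal.ofReal_pos.2 hδ))).exists
  choose d hd using hsmall
  obtain ⟨t, ht⟩ := isCompact_univ.elim_finite_subcover (fun x => PiNat.cylinder x (d x))
    (fun x => isOpen_cylinder _ x _) (fun x _ => mem_iUnion.2 ⟨x, self_mem_cylinder x _⟩)
  refine ⟨t.sup d, fun x => ?_⟩
  obtain ⟨y, hyt, hxy⟩ := mem_iUnion₂.1 (ht (mem_univ x))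
  calc μ.real (PiNat.cylinder x (t.sup d)) ≤ μ.real (PiNat.cylinder y (d y)) :=
        measureReal_mono (mem_cylinder_iff_eq.1 hxy ▸ cylinder_anti x (Finset.le_sup hyt))
    _ ≤ δ := ENNReal.toReal_le_of_le_ofReal hδ.le (hd y).le

def binVal : ℕ → Cantor → ℕ
  | 0, _ => 0
  | d + 1, x => 2 * binVal d x + (x d).toNat

lemma binVal_lt (d : ℕ) (x : Cantor) : binVal d x < 2 ^ d := by
  induction d with
  | zero => simp [binVal]
  | succ d ih => have := Bool.toNat_le (x d); rw [binVal, pow_succ]; omega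

lemma binVal_eq_iff {d : ℕ} {x y : Cantor} :
    binVal d y = binVal d x ↔ y ∈ PiNat.cylinder x d := by
  induction d with
  | zero => simp [binVal]
  | succ d ih =>
    have hy := Bool.toNat_le (y d)
    have hx := Bool.toNat_le (x d)
    have hbit : (y d).toNat = (x d).toNat ↔ y d = x d := by cases y d <;> cases x d <;> simp
    simp only [binVal, mem_cylinder_iff, Nat.lt_succ_iff_lt_or_eq, or_imp, forall_and,
      forall_eq] at ih ⊢
    rw [← ih, ← hbit]
    omega

lemma exists_mem_Ioc_of_step_le {f : ℕ → ℝ} {K δ : ℝ} {N : ℕ} (h0 : f 0 ≤ K) (hN : K < f N)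
    (hstep : ∀ t, f (t + 1) ≤ f t + δ) : ∃ t, f t ∈ Ioc (K - δ) K := by
  classical
  have hex : ∃ t, K < f t := ⟨N, hN⟩
  obtain ⟨s, hs⟩ : ∃ s, Nat.find hex = s + 1 :=
    Nat.exists_eq_succ_of_ne_zero fun h => (h ▸ Nat.find_spec hex).not_ge h0
  have hle : f s ≤ K := not_lt.1 (Nat.find_min hex (by omega))
  have hlt : K < f (s + 1) := hs ▸ Nat.find_spec hex
  exact ⟨s, by linarith [hstep s], hle⟩

lemma exists_isClopen_subset_measureReal_mem [NullSingletonClass μ] {V : Set Cantor}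
    (hV : IsClopen V) {K δ : ℝ} (hK : 0 ≤ K) (hδ : 0 < δ) (hKV : K < μ.real V) :
    ∃ A ⊆ V, IsClopen A ∧ μ.real A ∈ Ioc (K - δ) K := by
  obtain ⟨D, hD⟩ := exists_measureReal_cylinder_le (μ := μ) hδ
  have hclopen : ∀ t, IsClopen {x : Cantor | binVal D x < t} := fun t =>
    isClopen_of_cylinder_subset D fun x (hx : binVal D x < t) y hy =>
      show binVal D y < t from binVal_eq_iff.2 hy ▸ hx
  have hlevel : ∀ t, μ.real {x : Cantor | binVal D x = t} ≤ δ := fun t => by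
    rcases eq_empty_or_nonempty {x : Cantor | binVal D x = t} with h | ⟨x, hx⟩
    · simp [h, hδ.le]
    · refine (measureReal_mono fun y hy => ?_).trans (hD x)
      exact binVal_eq_iff.1 (hy.trans hx.symm)
  obtain ⟨t, ht⟩ := exists_mem_Ioc_of_step_le (f := fun t => μ.real (V ∩ {x | binVal D x < t}))
    (K := K) (δ := δ) (N := 2 ^ D) (by simpa using hK) (by simpa [binVal_lt] using hKV) fun t => by
      calc μ.real (V ∩ {x | binVal D x < t + 1})
          ≤ μ.real (V ∩ {x | binVal D x < t} ∪ {x | binVal D x = t}) :=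
            measureReal_mono fun x ⟨hxV, hx⟩ => by
              rcases Nat.lt_succ_iff_lt_or_eq.1 hx with h | h
              exacts [Or.inl ⟨hxV, h⟩, Or.inr h]
        _ ≤ μ.real (V ∩ {x | binVal D x < t}) + δ :=
            (measureReal_union_le _ _).trans (by gcongr; exact hlevel t)
  exact ⟨_, inter_subset_left, hV.inter (hclopen t), ht⟩

end Measure

def Straddles (U : Set Cantor) (k : ℕ) : Prop := ∀ b : Bool, (U ∩ {x | x k = b}).Nonempty

lemma Straddles.mono {U V : Set Cantor} {k : ℕ} (h : Straddles V k) (hVU : V ⊆ U) :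
    Straddles U k :=
  fun b => (h b).mono (inter_subset_inter_left _ hVU)

lemma not_straddles_of_subset {U : Set Cantor} {k : ℕ} {b : Bool} (h : U ⊆ {x | x k = b}) :
    ¬ Straddles U k := fun hU => by
  obtain ⟨x, hxU, hx⟩ := hU (!b)
  exact Bool.not_ne_self b (hx ▸ h hxU)

lemma exists_straddles {U : Set Cantor} (hU : IsOpen U) (hne : U.Nonempty) :
    ∃ k, Straddles U k := by
  obtain ⟨x, hx⟩ := hne
  obtain ⟨n, hn⟩ := exists_cylinder_subset hU hx
  exact ⟨n, fun b => ⟨Function.update x n b, hn (update_mem_cylinder x n b), by simp⟩⟩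

/-- Junk value `0` when `U` straddles no coordinate. -/
noncomputable def firstStraddle (U : Set Cantor) : ℕ := sInf {k | Straddles U k}

lemma straddles_firstStraddle {U : Set Cantor} (h : ∃ k, Straddles U k) :
    Straddles U (firstStraddle U) :=
  Nat.sInf_mem h

lemma firstStraddle_le {U : Set Cantor} {k : ℕ} (h : Straddles U k) : firstStraddle U ≤ k :=
  Nat.sInf_le h

lemma firstStraddle_mono {U V : Set Cantor} (hVU : V ⊆ U) (hV : ∃ k, Straddles V k) :
    firstStraddle U ≤ firstStraddle V :=
  firstStraddle_le ((straddles_firstStraddle hV).mono hVU)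

section Split

variable (μ : Measure Cantor) (K δ : ℝ) (k : ℕ) (U : Set Cantor)

/-- The last clause makes a coordinate `k` that keeps straddling cost almost `K` of measure at
every cut, so that it cannot straddle forever. -/
def IsChild (C : Set Cantor) : Prop :=
  IsClopen C ∧ C.Nonempty ∧ μ.real C ≤ K ∧ (Straddles C k → μ.real C + K ≤ μ.real U + δ)

def IsBalancedSplit (A B : Set Cantor) : Prop :=
  Disjoint A B ∧ A ∪ B = U ∧ IsChild μ K δ k U A ∧ IsChild μ K δ k U B

variable {μ K δ k U} [IsFiniteMeasure μ] [NullSingletonClass μ]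

/-- Cut `U` along the coordinate `k` if both halves are light enough; otherwise cut off a clopen
part of measure almost `K` from the heavy half. -/
lemma exists_isBalancedSplit (hU : IsClopen U) (hk : Straddles U k) (hδ : 0 < δ) (hδK : δ ≤ K)
    (hUK : μ.real U + δ ≤ 2 * K) : ∃ A B, IsBalancedSplit μ K δ k U A B := by
  set H : Bool → Set Cantor := fun b => U ∩ {x | x k = b}
  have hH : ∀ b, IsClopen (H b) := fun b =>
    hU.inter ((isClopen_discrete {b}).preimage (continuous_apply k))
  by_cases hlight : ∀ b, μ.real (H b) ≤ K
  · have hchild : ∀ b, IsChild μ K δ k U (H b) := fun b =>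
      ⟨hH b, hk b, hlight b, fun h => absurd h (not_straddles_of_subset inter_subset_right)⟩
    refine ⟨H true, H false, ?_, ?_, hchild true, hchild false⟩
    · exact Set.disjoint_left.2 fun x ⟨_, (hx : x k = true)⟩ ⟨_, hx'⟩ => by simp [hx] at hx'
    · ext x; cases hx : x k <;> simp [H, hx]
  simp only [not_forall, not_le] at hlight
  obtain ⟨b, hb⟩ := hlight
  obtain ⟨A, hAH, hA, hAlow, hAle⟩ :=
    exists_isClopen_subset_measureReal_mem (hH b) (hδ.trans_le hδK).le hδ hb
  have hAU : A ⊆ U := hAH.trans inter_subset_left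
  have hB : μ.real (U \ A) = μ.real U - μ.real A :=
    measureReal_sdiff hAU hA.isOpen.measurableSet
  have hAne : A.Nonempty := nonempty_iff_ne_empty.2 fun h => by
    simp only [h, measureReal_empty] at hAlow; linarith
  have hBne : (U \ A).Nonempty := by
    obtain ⟨x, hxU, hx⟩ := hk (!b)
    exact ⟨x, hxU, fun hxA => Bool.not_ne_self b (hx ▸ (hAH hxA).2)⟩
  refine ⟨A, U \ A, disjoint_sdiff_right, union_sdiff_cancel hAU,
    ⟨hA, hAne, hAle, fun h => absurd h (not_straddles_of_subset (hAH.trans inter_subset_right))⟩,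
    ⟨hU.diff hA, hBne, by linarith, fun _ => by linarith⟩⟩

end Split

section Bounds

noncomputable def levelBound (n : ℕ) : ℝ := (2 - 2⁻¹ ^ n) * 2⁻¹ ^ n

noncomputable def splitError (n : ℕ) : ℝ := (2⁻¹ ^ n) ^ 2 / 4

lemma levelBound_zero : levelBound 0 = 1 := by norm_num [levelBound]

lemma levelBound_le (n : ℕ) : levelBound n ≤ 2 * 2⁻¹ ^ n := by
  have : (0 : ℝ) ≤ 2⁻¹ ^ n := by positivity
  unfold levelBound; nlinarith

lemma splitError_pos (n : ℕ) : 0 < splitError n := by unfold splitError; positivity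

lemma levelBound_succ (n : ℕ) : levelBound (n + 1) = 2⁻¹ ^ n - (2⁻¹ ^ n) ^ 2 / 4 := by
  unfold levelBound; ring

lemma splitError_le_levelBound_succ (n : ℕ) : splitError n ≤ levelBound (n + 1) := by
  have h0 : (0 : ℝ) ≤ 2⁻¹ ^ n := by positivity
  have h1 : (2⁻¹ : ℝ) ^ n ≤ 1 := pow_le_one₀ (by norm_num) (by norm_num)
  rw [levelBound_succ, splitError]; nlinarith

lemma levelBound_add_splitError (n : ℕ) :
    levelBound n + splitError n ≤ 2 * levelBound (n + 1) := by
  have : (0 : ℝ) ≤ (2⁻¹ ^ n) ^ 2 := by positivity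
  rw [levelBound_succ, levelBound, splitError]; nlinarith

lemma exists_neg_of_le_sub_levelBound {u : ℕ → ℝ} {N : ℕ} (hN : u N ≤ levelBound N)
    (hstep : ∀ m ≥ N, u (m + 1) ≤ u m - levelBound (m + 1) + splitError m) : ∃ m, u m < 0 := by
  -- the right-hand side satisfies the recursion of `hstep` with equality
  have key : ∀ j,
      3 * u (N + j) ≤ 6 * 2⁻¹ ^ (N + j) - 2 * (2⁻¹ ^ (N + j)) ^ 2 - (2⁻¹ ^ N) ^ 2 := by
    intro j
    induction j with
    | zero => rw [levelBound] at hN; simp only [add_zero]; nlinarith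
    | succ j ih =>
      have h := hstep (N + j) (Nat.le_add_right N j)
      rw [levelBound_succ, splitError] at h
      rw [← add_assoc, pow_succ]
      nlinarith
  refine ⟨N + (N + 3), ?_⟩
  have h := key (N + 3)
  have ht : (2⁻¹ : ℝ) ^ (N + (N + 3)) = (2⁻¹ ^ N) ^ 2 / 8 := by
    rw [← add_assoc, ← two_mul, pow_add, pow_mul']; ring
  have hpos : (0 : ℝ) < 2⁻¹ ^ N := by positivity
  rw [ht] at h
  nlinarith

end Bounds

section Tree

namespace IsBalancedSplit

variable {μ : Measure Cantor} {K δ : ℝ} {k : ℕ} {U A B : Set Cantor}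

lemma isChild (h : IsBalancedSplit μ K δ k U A B) (b : Bool) :
    IsChild μ K δ k U (bif b then A else B) := by
  cases b
  exacts [h.2.2.2, h.2.2.1]

lemma subset (h : IsBalancedSplit μ K δ k U A B) (b : Bool) : (bif b then A else B) ⊆ U := by
  cases b <;> simp only [cond_false, cond_true, ← h.2.1]
  exacts [subset_union_right, subset_union_left]

lemma eq_of_inter_nonempty (h : IsBalancedSplit μ K δ k U A B) {b b' : Bool}
    (hbb' : ((bif b then A else B) ∩ bif b' then A else B).Nonempty) : b = b' := by
  cases b <;> cases b' <;> simp only [cond_false, cond_true] at hbb'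
  exacts [rfl, absurd hbb' (not_nonempty_iff_eq_empty.2 h.1.symm.inter_eq),
    absurd hbb' (not_nonempty_iff_eq_empty.2 h.1.inter_eq), rfl]

lemma exists_mem (h : IsBalancedSplit μ K δ k U A B) {x : Cantor} (hx : x ∈ U) :
    ∃ b, x ∈ bif b then A else B := by
  rw [← h.2.1] at hx
  rcases hx with hx | hx
  exacts [⟨true, hx⟩, ⟨false, hx⟩]

end IsBalancedSplit

variable (μ : Measure Cantor)

open Classical in
/-- Junk value `(U, U)` when `U` has no balanced split. -/
noncomputable def split (n : ℕ) (U : Set Cantor) : Set Cantor × Set Cantor :=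
  if h : ∃ p : Set Cantor × Set Cantor,
      IsBalancedSplit μ (levelBound (n + 1)) (splitError n) (firstStraddle U) U p.1 p.2
  then h.choose else (U, U)

noncomputable def child (n : ℕ) (U : Set Cantor) (b : Bool) : Set Cantor :=
  bif b then (split μ n U).1 else (split μ n U).2

noncomputable def piece : ℕ → Cantor → Set Cantor
  | 0, _ => univ
  | n + 1, z => child μ n (piece n z) (z n)

lemma piece_eq_of_mem_cylinder {n : ℕ} {y z : Cantor} (h : y ∈ PiNat.cylinder z n) :
    piece μ n y = piece μ n z := by
  induction n with
  | zero => rfl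
  | succ n ih =>
    simp only [piece, ih (cylinder_anti z n.le_succ h), h n n.lt_succ_self]

variable [IsProbabilityMeasure μ] [NullSingletonClass μ]

lemma isBalancedSplit_split {n : ℕ} {U : Set Cantor} (hU : IsClopen U) (hne : U.Nonempty)
    (hμU : μ.real U ≤ levelBound n) :
    IsBalancedSplit μ (levelBound (n + 1)) (splitError n) (firstStraddle U) U
      (split μ n U).1 (split μ n U).2 := by
  obtain ⟨A, B, h⟩ := exists_isBalancedSplit (μ := μ) hU
    (straddles_firstStraddle (exists_straddles hU.isOpen hne)) (splitError_pos n)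
    (splitError_le_levelBound_succ n) (by linarith [levelBound_add_splitError n])
  have hex : ∃ p : Set Cantor × Set Cantor, IsBalancedSplit μ (levelBound (n + 1)) (splitError n)
      (firstStraddle U) U p.1 p.2 := ⟨(A, B), h⟩
  rw [split, dif_pos hex]
  exact hex.choose_spec

lemma piece_invariant (n : ℕ) (z : Cantor) :
    IsClopen (piece μ n z) ∧ (piece μ n z).Nonempty ∧ μ.real (piece μ n z) ≤ levelBound n := by
  induction n with
  | zero => exact ⟨isClopen_univ, univ_nonempty, by simp [piece, levelBound_zero]⟩
  | succ n ih =>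
    obtain ⟨hc, hne, hle, -⟩ := (isBalancedSplit_split μ ih.1 ih.2.1 ih.2.2).isChild (z n)
    exact ⟨hc, hne, hle⟩

lemma isBalancedSplit_piece (n : ℕ) (z : Cantor) :
    IsBalancedSplit μ (levelBound (n + 1)) (splitError n) (firstStraddle (piece μ n z))
      (piece μ n z) (split μ n (piece μ n z)).1 (split μ n (piece μ n z)).2 :=
  isBalancedSplit_split μ (piece_invariant μ n z).1 (piece_invariant μ n z).2.1
    (piece_invariant μ n z).2.2

lemma piece_succ_subset (n : ℕ) (z : Cantor) : piece μ (n + 1) z ⊆ piece μ n z :=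
  (isBalancedSplit_piece μ n z).subset (z n)

lemma measureReal_piece_succ_le (n : ℕ) (z : Cantor)
    (h : Straddles (piece μ (n + 1) z) (firstStraddle (piece μ n z))) :
    μ.real (piece μ (n + 1) z) ≤ μ.real (piece μ n z) - levelBound (n + 1) + splitError n := by
  have := ((isBalancedSplit_piece μ n z).isChild (z n)).2.2.2 h
  simp only [piece, child] at this ⊢
  linarith

lemma mem_cylinder_of_piece_inter_nonempty {n : ℕ} {y z : Cantor}
    (h : (piece μ n y ∩ piece μ n z).Nonempty) : y ∈ PiNat.cylinder z n := by
  induction n with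
  | zero => simp
  | succ n ih =>
    have hyz :=
      ih (h.mono (inter_subset_inter (piece_succ_subset μ n y) (piece_succ_subset μ n z)))
    simp only [piece, child, piece_eq_of_mem_cylinder μ hyz] at h
    have hbit := (isBalancedSplit_piece μ n z).eq_of_inter_nonempty h
    exact fun i hi => (Nat.lt_succ_iff_lt_or_eq.1 hi).elim (hyz i) fun h => h ▸ hbit

lemma exists_mem_piece (x : Cantor) (n : ℕ) : ∃ z, x ∈ piece μ n z := by
  induction n with
  | zero => exact ⟨x, mem_univ x⟩
  | succ n ih =>
    obtain ⟨z, hz⟩ := ih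
    obtain ⟨b, hb⟩ := (isBalancedSplit_piece μ n z).exists_mem hz
    refine ⟨Function.update z n b, ?_⟩
    simpa [piece, child, piece_eq_of_mem_cylinder μ (update_mem_cylinder z n b)] using hb

/-- Two points that share all pieces of an address straddle a coordinate `k` at every level.
The first straddled coordinates then increase to a limit `q`, and from then on every cut is
the light-side cut at `q`, which removes almost `levelBound (m + 1)` at every step: impossible. -/
lemma iInter_piece_subsingleton (z : Cantor) : (⋂ n, piece μ n z).Subsingleton := by
  intro x hx x' hx'
  rw [mem_iInter] at hx hx'
  by_contra hne
  obtain ⟨k, hk⟩ := Function.ne_iff.1 hne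
  have hstr : ∀ n, Straddles (piece μ n z) k := fun n b => by
    by_cases h : x k = b
    exacts [⟨x, hx n, h⟩, ⟨x', hx' n, by cases b <;> cases hxk : x k <;> simp_all⟩]
  have hmono : Monotone fun n => firstStraddle (piece μ n z) :=
    monotone_nat_of_le_succ fun n => firstStraddle_mono (piece_succ_subset μ n z) ⟨k, hstr _⟩
  obtain ⟨q, N, hq⟩ := converges_of_monotone_of_bounded hmono fun n => firstStraddle_le (hstr n)
  obtain ⟨m, hm⟩ := exists_neg_of_le_sub_levelBound (u := fun n => μ.real (piece μ n z)) (N := N)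
    (piece_invariant μ N z).2.2 fun m hm => measureReal_piece_succ_le μ m z <| by
      have h := straddles_firstStraddle ⟨k, hstr (m + 1)⟩
      rwa [hq (m + 1) (by omega), ← hq m hm] at h
  exact measureReal_nonneg.not_gt hm

end Tree

section Address

variable (μ : Measure Cantor) [IsProbabilityMeasure μ] [NullSingletonClass μ]

lemma nonempty_iInter_piece (z : Cantor) : (⋂ n, piece μ n z).Nonempty :=
  IsCompact.nonempty_iInter_of_sequence_nonempty_isCompact_isClosed _
    (fun n => piece_succ_subset μ n z) (fun n => (piece_invariant μ n z).2.1)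
    (piece_invariant μ 0 z).1.isClosed.isCompact fun n => (piece_invariant μ n z).1.isClosed

noncomputable def pointOf (z : Cantor) : Cantor := (nonempty_iInter_piece μ z).some

lemma pointOf_mem_piece (n : ℕ) (z : Cantor) : pointOf μ z ∈ piece μ n z :=
  mem_iInter.1 (nonempty_iInter_piece μ z).some_mem n

lemma eq_pointOf {x z : Cantor} (h : ∀ n, x ∈ piece μ n z) : x = pointOf μ z :=
  iInter_piece_subsingleton μ z (mem_iInter.2 h) (nonempty_iInter_piece μ z).some_mem

lemma pointOf_image_cylinder_subset (n : ℕ) (z : Cantor) :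
    pointOf μ '' PiNat.cylinder z n ⊆ piece μ n z := by
  rintro _ ⟨y, hy, rfl⟩
  exact piece_eq_of_mem_cylinder μ hy ▸ pointOf_mem_piece μ n y

lemma pointOf_injective : Function.Injective (pointOf μ) := fun y z h => by
  have hyz : ∀ n, y ∈ PiNat.cylinder z n := fun n =>
    mem_cylinder_of_piece_inter_nonempty μ
      ⟨_, pointOf_mem_piece μ n y, h ▸ pointOf_mem_piece μ n z⟩
  have := mem_iInter.2 hyz
  rwa [iInter_cylinder] at this

lemma pointOf_surjective : Function.Surjective (pointOf μ) := fun x => by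
  have hclosed : ∀ n, IsClosed {z | x ∈ piece μ n z} := fun n =>
    (isClopen_of_cylinder_subset n fun z hz y hy =>
      show x ∈ piece μ n y from piece_eq_of_mem_cylinder μ hy ▸ hz).isClosed
  obtain ⟨z, hz⟩ := IsCompact.nonempty_iInter_of_sequence_nonempty_isCompact_isClosed
    (fun n => {z | x ∈ piece μ n z}) (fun n z hz => piece_succ_subset μ n z hz)
    (exists_mem_piece μ x) (hclosed 0).isCompact hclosed
  exact ⟨z, (eq_pointOf μ fun n => mem_iInter.1 hz n).symm⟩

lemma continuous_pointOf : Continuous (pointOf μ) := by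
  refine continuous_iff_continuousAt.2 fun z O hO => ?_
  obtain ⟨n, hn⟩ := exists_subset_nhds_of_isCompact' (V := fun n => piece μ n z)
    (antitone_nat_of_succ_le (piece_succ_subset μ · z)).directed_ge
    (fun n => (piece_invariant μ n z).1.isClosed.isCompact)
    (fun n => (piece_invariant μ n z).1.isClosed) fun x hx => eq_pointOf μ (mem_iInter.1 hx) ▸ hO
  refine Filter.mem_map.2 <|
    Filter.mem_of_superset ((isOpen_cylinder _ z n).mem_nhds (self_mem_cylinder z n)) fun y hy =>
      show pointOf μ y ∈ O from hn (pointOf_image_cylinder_subset μ n z ⟨y, hy, rfl⟩)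

noncomputable def pointHomeomorph : Cantor ≃ₜ Cantor :=
  (continuous_pointOf μ).homeoOfEquivCompactToT2
    (f := Equiv.ofBijective _ ⟨pointOf_injective μ, pointOf_surjective μ⟩)

lemma measureReal_preimage_symm_cyl_le (τ : List Bool) :
    μ.real ((pointHomeomorph μ).symm ⁻¹' cyl τ) ≤ levelBound τ.length := by
  rw [Homeomorph.preimage_symm, cyl_eq_cylinder]
  exact (measureReal_mono (pointOf_image_cylinder_subset μ _ _)).trans (piece_invariant μ _ _).2.2

end Address

end Cantor

theorem stmt_15_general (μ : Measure Cantor) [IsProbabilityMeasure μ]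
    (hcont : ∀ y : Cantor, μ {y} = 0) :
    ∃ Φ : Cantor ≃ₜ Cantor, ∃ φ : List Bool → List Bool,
      (∀ σ τ : List Bool, σ <+: τ → φ σ <+: φ τ) ∧
      (∀ x : Cantor, ∀ n : ℕ, Φ x ∈ cyl (φ (seg x n))) ∧
      (∀ x : Cantor, ∀ m : ℕ, ∃ n : ℕ, m ≤ (φ (seg x n)).length) ∧
      (∀ τ : List Bool,
        |(μ.map Φ (cyl τ)).toReal - (2:ℝ)⁻¹ ^ τ.length| ≤ (2:ℝ)⁻¹ ^ τ.length) := by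
  have : NullSingletonClass μ := ⟨hcont⟩
  let Φ := (Cantor.pointHomeomorph μ).symm
  refine ⟨Φ, Cantor.stringMap Φ, fun _ _ => Cantor.stringMap_prefix Φ,
    Cantor.apply_mem_cyl_stringMap Φ, Cantor.le_length_stringMap Φ.continuous, fun τ => ?_⟩
  have hle : (μ.map Φ (cyl τ)).toReal ≤ 2 * 2⁻¹ ^ τ.length := by
    rw [Measure.map_apply Φ.continuous.measurable (Cantor.measurableSet_cyl τ)]
    exact (Cantor.measureReal_preimage_symm_cyl_le μ τ).trans (Cantor.levelBound_le _)
  rw [abs_sub_le_iff]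
  constructor <;> linarith [ENNReal.toReal_nonneg (a := μ.map Φ (cyl τ))]

theorem stmt_15 (μ : Measure Cantor) [IsProbabilityMeasure μ]
    (hcont : ∀ y : Cantor, μ {y} = 0)
    (hpos : ∀ σ : List Bool, 0 < μ (cyl σ)) :
    ∃ Φ : Cantor ≃ₜ Cantor, ∃ φ : List Bool → List Bool,
      (∀ σ τ : List Bool, σ <+: τ → φ σ <+: φ τ) ∧
      (∀ x : Cantor, ∀ n : ℕ, Φ x ∈ cyl (φ (seg x n))) ∧
      (∀ x : Cantor, ∀ m : ℕ, ∃ n : ℕ, m ≤ (φ (seg x n)).length) ∧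
      (∀ τ : List Bool,
        |(μ.map Φ (cyl τ)).toReal - (2:ℝ)⁻¹ ^ τ.length| ≤ (2:ℝ)⁻¹ ^ τ.length) :=
  stmt_15_general μ hcont
end
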